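/- Let δ: Q₁ → G be an arrow weighting on a connected quiver Q, extended to walks by δ(a_n^{e_n}⋯a_1^{e_1}) = δ(a_n)^{e_n}⋯δ(a_1)^{e_1} with e_i = ±1. Then δ is connected (for all vertices x, y and all g ∈ G there is a walk from x to y of weight g) if and only if the smash coproduct quiver Q ⋊ G is connected as an undirected graph. -/

import Mathlib

open Quiver

universe u v

variable {V : Type u} [Quiver.{v + 1} V] {G : Type*} [Group G]

/-- The smash coproduct quiver `Q ⋊ G` attached to an arrow weighting
`δ : Q₁ → G`: vertices are pairs `x ⋊ g`. -/
structure SmashQ (V : Type u) [Quiver.{v + 1} V] (G : Type*) [Group G]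
    (δ : ∀ {a b : V}, (a ⟶ b) → G) where
  v : V
  g : G

/-- Arrows of `Q ⋊ G`: `a ⋊ g` goes from `s(a) ⋊ g` to `t(a) ⋊ δ(a)g`. -/
instance {δ : ∀ {a b : V}, (a ⟶ b) → G} : Quiver (SmashQ V G @δ) :=
  ⟨fun p q => {e : p.v ⟶ q.v // q.g = δ e * p.g}⟩

/-- The weight of a walk (a path in the symmetrification of `Q`):
`δ(a_n^{e_n} ⋯ a_1^{e_1}) = δ(a_n)^{e_n} ⋯ δ(a_1)^{e_1}` with `e_i = ±1`. -/
def wtWalk (δ : ∀ {a b : V}, (a ⟶ b) → G) :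
    ∀ {a b : Quiver.Symmetrify V}, Quiver.Path a b → G
  | _, _, .nil => 1
  | _, _, .cons p e =>
      (Sum.elim (fun f => δ f) (fun f => (δ f)⁻¹) e) * wtWalk @δ p

/-! A walk of weight `h` from `x` to `y` lifts, from any start `x ⋊ g`, to a walk in `Q ⋊ G`
ending at `y ⋊ hg`. Conversely, the projection `Q ⋊ G → Q` sends a walk from `x ⋊ g` to `y ⋊ h`
to a walk of weight `hg⁻¹`. -/

section

variable (δ : ∀ {a b : V}, (a ⟶ b) → G)

def wtStep {a b : Symmetrify V} (e : a ⟶ b) : G :=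
  Sum.elim (fun f => δ f) (fun f => (δ f)⁻¹) e

theorem wtWalk_cons {a b c : Symmetrify V} (p : Path a b) (e : b ⟶ c) :
    wtWalk @δ (p.cons e) = wtStep δ e * wtWalk @δ p :=
  wtWalk.eq_2 ..

namespace SmashQ

def liftStep {b c : Symmetrify V} (h : G) :
    ∀ e : b ⟶ c, Hom (V := Symmetrify (SmashQ V G @δ)) ⟨b, h⟩ ⟨c, wtStep δ e * h⟩
  | Sum.inl f => Sum.inl (⟨f, rfl⟩ : (⟨b, h⟩ : SmashQ V G @δ) ⟶ ⟨c, δ f * h⟩)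
  | Sum.inr f => Sum.inr (⟨f, (mul_inv_cancel_left _ _).symm⟩ :
      (⟨c, (δ f)⁻¹ * h⟩ : SmashQ V G @δ) ⟶ ⟨b, h⟩)

theorem nonempty_path_of_walk {x y : Symmetrify V} (w : Path x y) (g : G) :
    Nonempty (Path (V := Symmetrify (SmashQ V G @δ)) ⟨x, g⟩ ⟨y, wtWalk @δ w * g⟩) := by
  induction w with
  | nil =>
    rw [wtWalk.eq_1, one_mul]
    exact ⟨Path.nil⟩
  | cons w e ih =>
    obtain ⟨p⟩ := ih
    rw [wtWalk_cons, mul_assoc]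
    exact ⟨p.cons (liftStep δ _ e)⟩

def forget : SmashQ V G @δ ⥤q V where
  obj := SmashQ.v
  map e := e.1

theorem wtStep_map_forget {p q : Symmetrify (SmashQ V G @δ)} (e : p ⟶ q) :
    wtStep δ ((forget δ).symmetrify.map e) = q.g * p.g⁻¹ := by
  rcases e with ⟨f, hf⟩ | ⟨f, hf⟩ <;> simp [wtStep, forget, Prefunctor.symmetrify, hf]

theorem wtWalk_mapPath_forget {p q : Symmetrify (SmashQ V G @δ)} (w : Path p q) :
    wtWalk @δ ((forget δ).symmetrify.mapPath w) = q.g * p.g⁻¹ := by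
  induction w with
  | nil => exact (wtWalk.eq_1 ..).trans (mul_inv_cancel p.g).symm
  | cons w e ih =>
    rw [Prefunctor.mapPath_cons, wtWalk_cons, wtStep_map_forget, ih, mul_assoc, inv_mul_cancel_left]

end SmashQ

end

theorem connected_weighting_iff_smash_connected_general (δ : ∀ {a b : V}, (a ⟶ b) → G) :
    (∀ (x y : V) (g : G),
      ∃ w : Quiver.Path (Quiver.Symmetrify.of.obj x) (Quiver.Symmetrify.of.obj y),
        wtWalk @δ w = g)
    ↔ ∀ p q : SmashQ V G @δ,
        Nonempty (Quiver.Path (Quiver.Symmetrify.of.obj p) (Quiver.Symmetrify.of.obj q)) := by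
  constructor
  · intro h p q
    obtain ⟨w, hw⟩ := h p.v q.v (q.g * p.g⁻¹)
    have hpq := SmashQ.nonempty_path_of_walk @δ w p.g
    rw [hw, inv_mul_cancel_right] at hpq
    exact hpq
  · intro h x y g
    obtain ⟨w⟩ := h ⟨x, 1⟩ ⟨y, g⟩
    exact ⟨_, (SmashQ.wtWalk_mapPath_forget @δ w).trans (by simp)⟩

/-- Let `δ : Q₁ → G` be an arrow weighting on a connected
quiver `Q`. Then `δ` is connected (for all vertices `x, y` and every `g ∈ G`
there is a walk from `x` to `y` of weight `g`) if and only if the smash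
coproduct quiver `Q ⋊ G` is connected as an undirected graph. -/
theorem connected_weighting_iff_smash_connected (δ : ∀ {a b : V}, (a ⟶ b) → G)
    (hQ : ∀ x y : V,
      Nonempty (Quiver.Path (Quiver.Symmetrify.of.obj x) (Quiver.Symmetrify.of.obj y))) :
    (∀ (x y : V) (g : G),
      ∃ w : Quiver.Path (Quiver.Symmetrify.of.obj x) (Quiver.Symmetrify.of.obj y),
        wtWalk @δ w = g)
    ↔ ∀ p q : SmashQ V G @δ,
        Nonempty (Quiver.Path (Quiver.Symmetrify.of.obj p) (Quiver.Symmetrify.of.obj q)) :=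
  connected_weighting_iff_smash_connected_general δ
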